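/- arXiv:0709.1197 — 4 statements merged into one kernel-verified Lean document; each statement's English description precedes it below -/
import Mathlib

section
/- Let s be a word and p a state of a DFA with p ∉ Q·s (p is not in the image of the mapping induced by s). Then there exist minimal positive integers k and r such that p·s^k = p·s^(k+r). Moreover, s^k is a 2-reset word for the pair (p, p·s^r), and for every i < k, the word s^(k−i) is a 2-reset word for the pair (p·s^i, p·s^(r+i)). -/
/-- Extension of the transition function of a DFA to words. -/
def actW {Q A : Type*} (δ : Q → A → Q) (q : Q) (w : List A) : Q := w.foldl δ q

/-- The transformation of the state set induced by a word `s`. -/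
def step {Q A : Type*} (δ : Q → A → Q) (s : List A) : Q → Q := fun q => actW δ q s

/-- If `p` is not in the image of the mapping induced by `s`, then there are minimal
positive integers `k`, `r` with `p·s^k = p·s^(k+r)`; `s^k` is a 2-reset word for
`(p, p·s^r)` and `s^(k-i)` is a 2-reset word for `(p·s^i, p·s^(r+i))` for all `i < k`. -/
theorem exists_minimal_k_r_of_not_mem_image {Q A : Type*} [Fintype Q]
    (δ : Q → A → Q) (s : List A) (p : Q) (hp : p ∉ Set.range (step δ s)) :
    ∃ k r : ℕ, 0 < k ∧ 0 < r ∧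
      (step δ s)^[k] p = (step δ s)^[k + r] p ∧
      (∀ k' r' : ℕ, 0 < k' → 0 < r' → (step δ s)^[k'] p = (step δ s)^[k' + r'] p → k ≤ k') ∧
      (∀ r' : ℕ, 0 < r' → (step δ s)^[k] p = (step δ s)^[k + r'] p → r ≤ r') ∧
      (step δ s)^[k] p = (step δ s)^[k] ((step δ s)^[r] p) ∧
      (∀ i : ℕ, i < k →
        (step δ s)^[k - i] ((step δ s)^[i] p) =
          (step δ s)^[k - i] ((step δ s)^[r + i] p)) := by
  set f := step δ s with hf
  -- pigeonhole: the orbit map is not injective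
  obtain ⟨a, b, hab, heq⟩ : ∃ a b : ℕ, a ≠ b ∧ f^[a] p = f^[b] p := by
    obtain ⟨a, b, hab, heq⟩ := Finite.exists_ne_map_eq_of_infinite (fun n : ℕ => f^[n] p)
    exact ⟨a, b, hab, heq⟩
  -- wlog a < b; also a > 0 since p ∉ range f
  have key : ∃ k', (0 < k' ∧ ∃ r', 0 < r' ∧ f^[k'] p = f^[k' + r'] p) := by
    rcases lt_or_gt_of_ne hab with h | h
    · rcases Nat.eq_zero_or_pos a with rfl | ha
      · exact absurd ⟨f^[b-1] p, by
          rw [← Function.iterate_succ_apply' f (b-1) p, Nat.succ_eq_add_one,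
            Nat.sub_add_cancel h, ← heq]; rfl⟩ hp
      · exact ⟨a, ha, b - a, by omega, by rw [Nat.add_sub_cancel' h.le]; exact heq⟩
    · rcases Nat.eq_zero_or_pos b with rfl | hb
      · exact absurd ⟨f^[a-1] p, by
          rw [← Function.iterate_succ_apply' f (a-1) p, Nat.succ_eq_add_one,
            Nat.sub_add_cancel h, heq]; rfl⟩ hp
      · exact ⟨b, hb, a - b, by omega, by rw [Nat.add_sub_cancel' h.le]; exact heq.symm⟩
  classical
  set k := Nat.find key with hk
  obtain ⟨hkpos, hr⟩ := Nat.find_spec key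
  set r := Nat.find hr with hrdef
  obtain ⟨hrpos, hmain⟩ := Nat.find_spec hr
  refine ⟨k, r, hkpos, hrpos, hmain, ?_, ?_, ?_, ?_⟩
  · intro k' r' hk' hr' hEq
    exact Nat.find_min' key ⟨hk', r', hr', hEq⟩
  · intro r' hr' hEq
    exact Nat.find_min' hr ⟨hr', hEq⟩
  · rw [← Function.iterate_add_apply]; exact hmain
  · intro i hi
    rw [← Function.iterate_add_apply, ← Function.iterate_add_apply]
    have h1 : k - i + i = k := Nat.sub_add_cancel hi.le
    have h2 : k - i + (r + i) = k + r := by omega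
    rw [h1, h2]; exact hmain
end

section
/- Let s be a word and p a state of a DFA with p ∉ Q·s, and suppose the minimal integers k, r with p·s^k = p·s^(k+r) satisfy r = 1. Then for every i < k, the pair (p·s^i, p·s^k) has 2-reset word s^(k−i), and the word s^k maps all k+1 distinct states p, p·s, ..., p·s^k to the single state p·s^k. -/
/-- Case r = 1: if `p ∉ Q·s` and `k` is minimal with `p·s^k = p·s^(k+1)`, then for
every `i < k` the pair `(p·s^i, p·s^k)` has 2-reset word `s^(k-i)`, the states
`p, p·s, ..., p·s^k` are pairwise distinct, and `s^k` maps them all to `p·s^k`. -/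
theorem case_r_eq_one {Q A : Type*} [Fintype Q]
    (δ : Q → A → Q) (s : List A) (p : Q) (hp : p ∉ Set.range (step δ s))
    (k : ℕ) (hk : (step δ s)^[k] p = (step δ s)^[k + 1] p)
    (hmin : ∀ k' : ℕ, (step δ s)^[k'] p = (step δ s)^[k' + 1] p → k ≤ k') :
    (∀ i : ℕ, i < k →
        (step δ s)^[k - i] ((step δ s)^[i] p) =
          (step δ s)^[k - i] ((step δ s)^[k] p)) ∧
      (∀ i ≤ k, ∀ j ≤ k, (step δ s)^[i] p = (step δ s)^[j] p → i = j) ∧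
      (∀ i ≤ k, (step δ s)^[k] ((step δ s)^[i] p) = (step δ s)^[k] p) := by
  set f := step δ s with hf
  have fix : f ((f^[k]) p) = f^[k] p := by
    rw [← Function.iterate_succ_apply' f k p]; exact hk.symm
  have stable : ∀ n, f^[n] (f^[k] p) = f^[k] p := by
    intro n; induction n with
    | zero => rfl
    | succ n ih => rw [Function.iterate_succ_apply', ih, fix]
  refine ⟨?_, ?_, ?_⟩
  · intro i hi
    rw [← Function.iterate_add_apply, stable, Nat.sub_add_cancel hi.le]
  · intro i hi j hj hij
    by_contra hne
    wlog h : i < j generalizing i j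
    · exact this j hj i hi hij.symm (Ne.symm hne) (by omega : j < i)
    obtain ⟨t, rfl⟩ := Nat.exists_eq_add_of_lt h
    have per : ∀ m, f^[i + m*(t+1)] p = f^[i] p := by
      intro m; induction m with
      | zero => simp
      | succ m ih =>
        have e : i + (m+1)*(t+1) = (m*(t+1)) + (i + t + 1) := by ring
        rw [e, Function.iterate_add_apply, ← hij, ← Function.iterate_add_apply,
          Nat.add_comm, ih]
    have hk' : k ≤ i + k*(t+1) := by nlinarith
    have e1 : f^[i] p = f^[k] p := by
      calc f^[i] p = f^[i + k*(t+1)] p := (per k).symm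
        _ = f^[(i + k*(t+1) - k) + k] p := by rw [Nat.sub_add_cancel hk']
        _ = f^[k] p := by rw [Function.iterate_add_apply, stable]
    have e2 : f^[i] p = f^[i+1] p := by
      rw [e1, Function.iterate_succ_apply', e1, fix]
    exact absurd (hmin i e2) (by omega)
  · intro i hi
    rw [← Function.iterate_add_apply, add_comm, Function.iterate_add_apply, stable]
end

section
/- Suppose r·α = t·α for a letter α and two distinct states r, t of a DFA, and suppose r and r·α are consecutive states on a cycle C of the transition graph (i.e., there is a word s with first letter α, of length equal to the length of C, such that r·s = r). Then |Q·s| < |Q|, and there exists a state p ∈ Q \ Q·s and a minimal integer k with p·s^k = p·s^(k+1); the word s^k maps the k+1 distinct states p, p·s, ..., p·s^k all to the single state r. -/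
/-- If `r·α = t·α` for distinct states `r ≠ t` and `s` is a word with first letter `α`
going around a cycle through `r` (so `r·s = r`), then `|Q·s| < |Q|` and there is a
state `p ∉ Q·s` and a minimal `k` with `p·s^k = p·s^(k+1)` such that `s^k` maps the
`k+1` distinct states `p, p·s, ..., p·s^k` all to `r`. -/
theorem cycle_merging_lemma {Q A : Type*} [Fintype Q] [DecidableEq Q]
    (δ : Q → A → Q) (α : A) (r t : Q) (hrt : r ≠ t) (hα : δ r α = δ t α)
    (s : List A) (hne : s ≠ []) (hhead : s.head? = some α) (hcycle : actW δ r s = r) :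
    (Finset.univ.image (step δ s)).card < Fintype.card Q ∧
      ∃ p : Q, p ∉ Set.range (step δ s) ∧
        ∃ k : ℕ, (step δ s)^[k] p = (step δ s)^[k + 1] p ∧
          (∀ k' : ℕ, (step δ s)^[k'] p = (step δ s)^[k' + 1] p → k ≤ k') ∧
          (∀ i ≤ k, ∀ j ≤ k, (step δ s)^[i] p = (step δ s)^[j] p → i = j) ∧
          (∀ i ≤ k, (step δ s)^[k] ((step δ s)^[i] p) = r) := by
  classical
  set f : Q → Q := step δ s with hf
  obtain ⟨a, tl, rfl⟩ : ∃ a tl, s = a :: tl := by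
    cases s with
    | nil => exact absurd rfl hne
    | cons a tl => exact ⟨a, tl, rfl⟩
  have ha : a = α := by simpa using hhead
  subst ha
  have hfr : f r = r := hcycle
  have hft : f t = r := by
    show List.foldl δ (δ t a) tl = r
    rw [← hα]
    exact hcycle
  -- the set of states whose orbit reaches r
  have hdec : ∀ q : Q, Decidable (∃ n, f^[n] q = r) := fun q => Classical.dec _
  -- distance to r
  let d : Q → ℕ := fun q => if h : ∃ n, f^[n] q = r then Nat.find h else 0
  have hd_spec : ∀ q, (∃ n, f^[n] q = r) → f^[d q] q = r := by
    intro q h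
    simp only [d, dif_pos h]
    exact Nat.find_spec h
  have hd_min : ∀ q n, f^[n] q = r → d q ≤ n := by
    intro q n hn
    have h : ∃ n, f^[n] q = r := ⟨n, hn⟩
    simp only [d, dif_pos h]
    exact Nat.find_le hn
  let T : Finset Q := Finset.univ.filter (fun q => ∃ n, f^[n] q = r)
  have hrT : r ∈ T := by
    simp only [T, Finset.mem_filter, Finset.mem_univ, true_and]
    exact ⟨0, rfl⟩
  obtain ⟨p, hpT, hpmax⟩ := T.exists_max_image d ⟨r, hrT⟩
  have hpR : ∃ n, f^[n] p = r := by
    simpa only [T, Finset.mem_filter, Finset.mem_univ, true_and] using hpT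
  set k := d p with hk
  have hpk : f^[k] p = r := hd_spec p hpR
  -- d t = 1, hence k ≥ 1
  have htT : t ∈ T := by
    simp only [T, Finset.mem_filter, Finset.mem_univ, true_and]
    exact ⟨1, hft⟩
  have hdt : d t = 1 := by
    have h1 : d t ≤ 1 := hd_min t 1 hft
    have h0 : d t ≠ 0 := by
      intro h
      have := hd_spec t ⟨1, hft⟩
      rw [h] at this
      exact hrt this.symm
    omega
  have hk1 : 1 ≤ k := by
    have := hpmax t htT
    omega
  have hpr : p ≠ r := by
    intro h
    have : d r = 0 := Nat.le_zero.mp (hd_min r 0 rfl)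
    rw [h] at hk
    omega
  -- p is not in the range of f
  have hprange : p ∉ Set.range f := by
    rintro ⟨q, rfl⟩
    have hqR : ∃ n, f^[n] q = r := ⟨k + 1, by
      rw [Function.iterate_succ_apply]; exact hpk⟩
    have hqT : q ∈ T := by
      simp only [T, Finset.mem_filter, Finset.mem_univ, true_and]; exact hqR
    have hm := hd_spec q hqR
    have hm0 : d q ≠ 0 := by
      intro h
      rw [h] at hm
      have hq : q = r := by simpa using hm
      exact hpr (by rw [hq]; exact hfr)
    have hstep : f^[d q - 1] (f q) = r := by
      rw [← Function.iterate_succ_apply, Nat.succ_eq_add_one,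
        Nat.sub_add_cancel (Nat.one_le_iff_ne_zero.mpr hm0)]
      exact hm
    have h1 : d (f q) ≤ d q - 1 := hd_min _ _ hstep
    have h2 : d q ≤ k := hpmax q hqT
    omega
  refine ⟨?_, p, hprange, k, ?_, ?_, ?_, ?_⟩
  · have hsub : Finset.univ.image f ⊂ Finset.univ := by
      refine ⟨Finset.subset_univ _, fun hsu => ?_⟩
      have : p ∈ Finset.univ.image f := hsu (Finset.mem_univ p)
      obtain ⟨q, -, hq⟩ := Finset.mem_image.mp this
      exact hprange ⟨q, hq⟩
    rw [← Finset.card_univ]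
    exact Finset.card_lt_card hsub
  · rw [Function.iterate_succ_apply', hpk, hfr]
  · intro k' hk'
    by_contra h
    push_neg at h
    have hfix : f (f^[k'] p) = f^[k'] p := by
      conv_rhs => rw [hk']
      rw [Function.iterate_succ_apply']
    have : f^[k] p = f^[k'] p := by
      have : f^[k - k'] (f^[k'] p) = f^[k'] p := Function.iterate_fixed hfix _
      rw [← Function.iterate_add_apply] at this
      rwa [Nat.sub_add_cancel (le_of_lt h)] at this
    have : f^[k'] p = r := by rw [← this, hpk]
    have := hd_min p k' this
    omega
  · have key : ∀ i ≤ k, ∀ j ≤ k, i ≤ j → f^[i] p = f^[j] p → i = j := by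
      intro i hi j hj hij heq
      have : f^[k - j + i] p = r := by
        rw [Function.iterate_add_apply, heq, ← Function.iterate_add_apply,
          Nat.sub_add_cancel hj]
        exact hpk
      have := hd_min p _ this
      omega
    intro i hi j hj heq
    rcases le_total i j with h | h
    · exact key i hi j hj h heq
    · exact (key j hj i hi h heq.symm).symm
  · intro i hi
    rw [← Function.iterate_add_apply, Nat.add_comm, Function.iterate_add_apply, hpk]
    exact Function.iterate_fixed hfr i
end

section
/- The transition semigroup of the Černý automaton C_n contains a nilpotent-like element t of order n−1, i.e., a transformation t such that t^{n-1} is a constant map but t^{n-2} is not; consequently some power of t is a synchronizing transformation. -/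
/-- The cyclic-shift generator of the Černý automaton, as an element of the
transformation monoid of `ZMod n`. -/
def cernyA (n : ℕ) : Function.End (ZMod n) := fun i => i + 1

/-- The merging generator of the Černý automaton: `b(0) = 1`, `b(i) = i` otherwise. -/
def cernyB (n : ℕ) : Function.End (ZMod n) := fun i => if i = 0 then 1 else i

/-- The transition semigroup of the Černý automaton C_n contains an element `t`
such that `t^(n-1)` is a constant map but `t^(n-2)` is not; consequently some
positive power of `t` is a synchronizing transformation. -/
theorem cerny_semigroup_nilpotent (n : ℕ) (hn : 2 ≤ n) :
    ∃ t : Function.End (ZMod n),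
      t ∈ Subsemigroup.closure {cernyA n, cernyB n} ∧
      (∃ c : ZMod n, ∀ q : ZMod n, (t ^ (n - 1)) q = c) ∧
      ¬(∃ c : ZMod n, ∀ q : ZMod n, (t ^ (n - 2)) q = c) ∧
      (∃ m : ℕ, 0 < m ∧ ∃ c : ZMod n, ∀ q : ZMod n, (t ^ m) q = c) := by
  haveI : Fact (1 < n) := ⟨by omega⟩
  haveI : NeZero n := ⟨by omega⟩
  set a := cernyA n with ha
  set b := cernyB n with hb
  set t : Function.End (ZMod n) := a ^ (n - 1) * b with htdef
  -- powers of a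
  have hapow : ∀ (k : ℕ) (q : ZMod n), (a ^ k) q = q + (k : ZMod n) := by
    intro k
    induction k with
    | zero => intro q; simp [pow_zero]; rfl
    | succ k ih =>
      intro q
      have : (a ^ (k + 1)) q = (a ^ k) (a q) := by rw [pow_succ]; rfl
      rw [this, ih]
      show (q + 1) + (k : ZMod n) = q + ((k : ℕ) + 1 : ℕ)
      push_cast
      ring
  have hncast : ((n : ℕ) : ZMod n) = 0 := ZMod.natCast_self n
  -- description of t
  have ht : ∀ q : ZMod n, t q = if q = 0 then 0 else q - 1 := by
    intro q
    have : t q = (a ^ (n - 1)) (b q) := rfl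
    rw [this, hapow]
    have hcast : ((n - 1 : ℕ) : ZMod n) = -1 := by
      rw [Nat.cast_sub (by omega), hncast]; ring
    rw [hcast]
    by_cases hq : q = 0
    · simp [hb, cernyB, hq]
    · simp [hb, cernyB, hq, sub_eq_add_neg]
  -- key lemma
  have key : ∀ (k : ℕ) (q : ZMod n), (t ^ k) q = if q.val ≤ k then 0 else q - (k : ZMod n) := by
    intro k
    induction k with
    | zero =>
      intro q
      have h0 : (t ^ 0) q = q := rfl
      rw [h0]
      by_cases hq : q = 0
      · simp [hq]
      · have : q.val ≠ 0 := fun h => hq ((ZMod.val_eq_zero q).mp h)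
        simp [this]
    | succ k ih =>
      intro q
      have hstep : (t ^ (k + 1)) q = (t ^ k) (t q) := by rw [pow_succ]; rfl
      rw [hstep, ht]
      by_cases hq : q = 0
      · rw [if_pos hq, ih]
        simp [hq]
      · rw [if_neg hq]
        have hv1 : 1 ≤ q.val := by
          have : q.val ≠ 0 := fun h => hq ((ZMod.val_eq_zero q).mp h)
          omega
        have hvlt : q.val < n := ZMod.val_lt q
        have hval : (q - 1).val = q.val - 1 := by
          have hqc : ((q.val : ℕ) : ZMod n) = q := by rw [ZMod.natCast_val, ZMod.cast_id]
          have : q - 1 = ((q.val - 1 : ℕ) : ZMod n) := by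
            rw [Nat.cast_sub hv1, hqc]
            norm_num
          rw [this, ZMod.val_cast_of_lt (by omega)]
        rw [ih, hval]
        have hcond : (q.val - 1 ≤ k) ↔ (q.val ≤ k + 1) := by omega
        by_cases hc : q.val ≤ k + 1
        · rw [if_pos (hcond.mpr hc), if_pos hc]
        · rw [if_neg (fun h => hc (hcond.mp h)), if_neg hc]
          push_cast
          ring
  refine ⟨t, ?_, ?_, ?_, ?_⟩
  · -- closure membership
    have haS : a ∈ Subsemigroup.closure {cernyA n, cernyB n} :=
      Subsemigroup.subset_closure (by left; rfl)
    have hbS : b ∈ Subsemigroup.closure {cernyA n, cernyB n} :=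
      Subsemigroup.subset_closure (by right; rfl)
    have hpow : ∀ k : ℕ, a ^ (k + 1) ∈ Subsemigroup.closure {cernyA n, cernyB n} := by
      intro k
      induction k with
      | zero => simpa using haS
      | succ k ih =>
        rw [pow_succ]
        exact mul_mem ih haS
    have : a ^ (n - 1) ∈ Subsemigroup.closure {cernyA n, cernyB n} := by
      have : n - 1 = (n - 2) + 1 := by omega
      rw [this]; exact hpow (n - 2)
    exact mul_mem this hbS
  · -- t^(n-1) constant
    refine ⟨0, fun q => ?_⟩
    rw [key]
    have : q.val ≤ n - 1 := by have := ZMod.val_lt q; omega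
    rw [if_pos this]
  · -- t^(n-2) not constant
    rintro ⟨c, hc⟩
    have h0 : (t ^ (n - 2)) 0 = 0 := by
      rw [key]
      simp
    have h1 : (t ^ (n - 2)) ((n - 1 : ℕ) : ZMod n) = 1 := by
      rw [key]
      have hval : (((n - 1 : ℕ) : ZMod n)).val = n - 1 := ZMod.val_cast_of_lt (by omega)
      rw [hval, if_neg (by omega)]
      rw [← Nat.cast_sub (by omega : n - 2 ≤ n - 1)]
      norm_num [show n - 1 - (n - 2) = 1 from by omega]
    have := (hc 0).trans (hc ((n - 1 : ℕ) : ZMod n)).symm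
    rw [h0, h1] at this
    exact zero_ne_one this
  · -- some positive power constant
    refine ⟨n - 1, by omega, 0, fun q => ?_⟩
    rw [key]
    have : q.val ≤ n - 1 := by have := ZMod.val_lt q; omega
    rw [if_pos this]
end
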